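/- Let G be a finite connected undirected graph with nonnegative real edge weights whose vertex set is partitioned into pairwise disjoint nonempty clusters C_1,…,C_k, each inducing a connected subgraph G[C_i]. For each i let T_i be a minimum spanning tree of G[C_i], and let F be a set of inter-cluster edges of G whose image under cluster-contraction is a minimum-weight spanning tree of the weighted cluster-contraction graph G'. Then the subgraph T̃ of G with edge set F ∪ E(T_1) ∪ … ∪ E(T_k) is a clustered spanning tree of G, and w(T̃) ≤ w(T) for every clustered spanning tree T of G. -/

import Mathlib

open SimpleGraph

/-- The clusters `C i` form a partition of the vertex set:
they are nonempty, pairwise disjoint, and cover every vertex. -/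
def IsPartition {V : Type*} {k : ℕ} (C : Fin k → Set V) : Prop :=
  (∀ i, (C i).Nonempty) ∧ (Pairwise fun i j => Disjoint (C i) (C j)) ∧
    (⋃ i, C i) = Set.univ

/-- `T` is a clustered spanning tree of `G`: a spanning tree such that each
cluster induces a connected subgraph (a subtree) of `T`. -/
def IsClusteredSpanningTree {V : Type*} {k : ℕ} (G : SimpleGraph V) (C : Fin k → Set V)
    (T : SimpleGraph V) : Prop :=
  T ≤ G ∧ T.IsTree ∧ ∀ i, (T.induce (C i)).Connected

/-- The cluster-contraction of a graph: vertices are the cluster indices, with an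
edge between two distinct clusters iff some edge of `G` joins them. -/
def contractClusters {V : Type*} {k : ℕ} (G : SimpleGraph V) (C : Fin k → Set V) :
    SimpleGraph (Fin k) where
  Adj i j := i ≠ j ∧ ∃ u ∈ C i, ∃ v ∈ C j, G.Adj u v
  symm := by
    constructor
    rintro i j ⟨hij, u, hu, v, hv, huv⟩
    exact ⟨hij.symm, v, hv, u, hu, huv.symm⟩
  loopless := by constructor; rintro i ⟨hii, -⟩; exact hii rfl

/-- The (unordered) edge `e` joins the vertex sets `A` and `B`. -/
def Crosses {V : Type*} (e : Sym2 V) (A B : Set V) : Prop :=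
  ∃ a ∈ A, ∃ b ∈ B, e = s(a, b)

/-- The weight of an edge of the cluster-contraction graph: the minimum weight of a
`G`-edge joining the two clusters. -/
noncomputable def contractWeight {V : Type*} {k : ℕ} (G : SimpleGraph V)
    (w : Sym2 V → ℝ) (C : Fin k → Set V) : Sym2 (Fin k) → ℝ :=
  Sym2.lift ⟨fun i j => sInf {x | ∃ u v, G.Adj u v ∧
      ((u ∈ C i ∧ v ∈ C j) ∨ (u ∈ C j ∧ v ∈ C i)) ∧ x = w s(u, v)},
    by
      intro i j
      apply congrArg sInf
      apply Set.ext
      intro x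
      constructor <;> rintro ⟨u, v, h1, h2, h3⟩ <;> exact ⟨u, v, h1, h2.symm, h3⟩⟩

/-- The total weight of the edges of a graph. -/
noncomputable def wsum {V : Type*} (H : SimpleGraph V) (w : Sym2 V → ℝ) : ℝ :=
  ∑ᶠ e ∈ H.edgeSet, w e

/-!
Write `T̃` for the graph with edge set `F ∪ ⋃ i, E(Tᵢ)`. The edges of `F` cross between clusters
while those of `Tᵢ` stay inside `Cᵢ`, so `T̃` restricted to `Cᵢ` is `Tᵢ`. Since `F` maps bijectively
onto the edges of the connected graph `T'`, the graph `T̃` is connected, and it has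
`(k - 1) + ∑ (|Cᵢ| - 1) = |V| - 1` edges, so it is a tree.

Any clustered spanning tree `T` splits into its edges inside the clusters, which form a spanning
tree of each `G[Cᵢ]`, and its edges between clusters. The contraction of `T` is connected, and so
it contains a spanning tree `H` of the contraction graph. Each edge of `H` lifts to a distinct
inter-cluster edge of `T` of at least the contracted weight. Hence
`w(T) ≥ w'(H) + ∑ w(Tᵢ) ≥ w'(T') + ∑ w(Tᵢ) = w(T̃)`.
-/

open scoped Function

lemma Set.disjoint_sym2 {α : Type*} {s t : Set α} (h : Disjoint s t) : Disjoint s.sym2 t.sym2 := by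
  rw [Set.disjoint_iff_inter_eq_empty, ← Set.sym2_inter, h.inter_eq, Set.sym2_empty]

lemma Set.union_iUnion_inter_eq {α ι : Type*} {F : Set α} {s t : ι → Set α}
    (hs : Pairwise (Disjoint on s)) (hF : Disjoint F (⋃ i, s i)) (ht : ∀ i, t i ⊆ s i) (i : ι) :
    (F ∪ ⋃ j, t j) ∩ s i = t i := by
  ext e
  simp only [Set.mem_inter_iff, Set.mem_union, Set.mem_iUnion]
  refine ⟨?_, fun he => ⟨Or.inr ⟨i, he⟩, ht i he⟩⟩
  rintro ⟨heF | ⟨j, hej⟩, hei⟩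
  · exact (Set.disjoint_left.1 hF heF (Set.mem_iUnion.2 ⟨i, hei⟩)).elim
  · obtain rfl : j = i := by_contra fun hji => Set.disjoint_left.1 (hs hji) (ht j hej) hei
    exact hej

lemma finsum_mem_union_iUnion {α ι M : Type*} [Fintype ι] [AddCommMonoid M] {F : Set α}
    {t : ι → Set α} (hF : F.Finite) (ht : ∀ i, (t i).Finite) (hFt : Disjoint F (⋃ i, t i))
    (htt : Pairwise (Disjoint on t)) (f : α → M) :
    ∑ᶠ e ∈ F ∪ ⋃ i, t i, f e = ∑ᶠ e ∈ F, f e + ∑ i, ∑ᶠ e ∈ t i, f e := by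
  rw [finsum_mem_union hFt hF (Set.finite_iUnion ht), finsum_mem_iUnion htt ht,
    finsum_eq_sum_of_fintype fun i => ∑ᶠ e ∈ t i, f e]

lemma finsum_mem_eq_diff_add_finsum_inter {α ι M : Type*} [Fintype ι] [AddCommMonoid M]
    {E : Set α} (hE : E.Finite) {s : ι → Set α} (hs : Pairwise (Disjoint on s)) (f : α → M) :
    ∑ᶠ e ∈ E, f e = ∑ᶠ e ∈ E \ ⋃ i, s i, f e + ∑ i, ∑ᶠ e ∈ E ∩ s i, f e := by
  conv_lhs => rw [← Set.sdiff_union_inter E (⋃ i, s i), Set.inter_iUnion]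
  refine finsum_mem_union_iUnion (hE.subset Set.sdiff_subset)
    (fun i => hE.subset Set.inter_subset_left) ?_
    (fun i j hij => (hs hij).mono Set.inter_subset_right Set.inter_subset_right) f
  exact Set.disjoint_sdiff_left.mono_right
    (Set.iUnion_mono fun i => Set.inter_subset_right)

lemma finsum_mem_le_finsum_mem_of_forall_exists {α β M : Type*} [AddCommMonoid M]
    [PartialOrder M] [IsOrderedAddMonoid M] {A : Set α} {B : Set β} (hB : B.Finite)
    (g : β → α) {f : α → M} {u : β → M} (hu : ∀ b ∈ B, 0 ≤ u b)
    (h : ∀ a ∈ A, ∃ b ∈ B, g b = a ∧ f a ≤ u b) :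
    ∑ᶠ a ∈ A, f a ≤ ∑ᶠ b ∈ B, u b := by
  classical
  cases isEmpty_or_nonempty β
  · obtain rfl : A = ∅ := Set.eq_empty_of_forall_notMem fun a ha => isEmptyElim (h a ha).choose
    simp [Set.eq_empty_of_isEmpty B]
  choose! φ hφB hφg hφle using h
  have hA : A.Finite := (hB.image g).subset fun a ha => ⟨φ a, hφB a ha, hφg a ha⟩
  rw [finsum_mem_eq_finite_toFinset_sum _ hA, finsum_mem_eq_finite_toFinset_sum _ hB]
  calc ∑ a ∈ hA.toFinset, f a ≤ ∑ a ∈ hA.toFinset, u (φ a) :=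
        Finset.sum_le_sum fun a ha => hφle a (hA.mem_toFinset.1 ha)
    _ = ∑ b ∈ hA.toFinset.image φ, u b := by
        refine (Finset.sum_image fun a ha a' ha' haa' => ?_).symm
        rw [← hφg a (hA.mem_toFinset.1 ha), ← hφg a' (hA.mem_toFinset.1 ha'), haa']
    _ ≤ ∑ b ∈ hB.toFinset, u b := by
        refine Finset.sum_le_sum_of_subset_of_nonneg ?_ fun b hb _ => hu b (hB.mem_toFinset.1 hb)
        simp only [Finset.image_subset_iff, Set.Finite.mem_toFinset]
        exact fun a ha => hφB a ha

namespace SimpleGraph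

variable {V W : Type*} {G H : SimpleGraph V}

lemma edgeSet_subset_sym2_iff_forall_adj {s : Set V} :
    G.edgeSet ⊆ s.sym2 ↔ ∀ u v, G.Adj u v → u ∈ s ∧ v ∈ s :=
  ⟨fun h u v huv => Set.mk_mem_sym2_iff.1 (h huv),
    fun h e he => by induction e using Sym2.ind; exact h _ _ he⟩

lemma edgeSet_fromEdgeSet_of_subset {s : Set (Sym2 V)} (h : s ⊆ G.edgeSet) :
    (fromEdgeSet s).edgeSet = s := by
  rw [edgeSet_fromEdgeSet, sdiff_eq_left]
  exact Set.disjoint_left.2 fun e he => G.not_isDiag_of_mem_edgeSet (h he)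

lemma induce_eq_of_edgeSet_inter_sym2_eq {s : Set V}
    (h : G.edgeSet ∩ s.sym2 = H.edgeSet ∩ s.sym2) : G.induce s = H.induce s := by
  ext u v
  simpa [u.2, v.2] using congrArg (s(u.1, v.1) ∈ ·) h

lemma induce_fromEdgeSet_inter_sym2 (s : Set V) :
    (fromEdgeSet (G.edgeSet ∩ s.sym2)).induce s = G.induce s :=
  induce_eq_of_edgeSet_inter_sym2_eq <| by
    rw [edgeSet_fromEdgeSet_of_subset Set.inter_subset_left, Set.inter_assoc, Set.inter_self]

lemma ncard_edgeSet_add_one_of_isTree_induce [Finite V] {s : Set V} (hG : G.edgeSet ⊆ s.sym2)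
    (h : (G.induce s).IsTree) : G.edgeSet.ncard + 1 = s.ncard := by
  have himage : G.edgeSet = Sym2.map (↑) '' (G.induce s).edgeSet := by
    ext e
    induction e using Sym2.ind with | _ a b => ?_
    refine ⟨fun hab => ?_, ?_⟩
    · obtain ⟨ha, hb⟩ := hG hab
      exact ⟨s(⟨a, ha⟩, ⟨b, hb⟩), hab, rfl⟩
    · rintro ⟨f, hf, hfab⟩
      induction f using Sym2.ind
      rw [← hfab]
      exact hf
  rw [himage, Set.ncard_image_of_injective _ (Sym2.map.injective Subtype.val_injective),
    ← Nat.card_coe_set_eq, ← Nat.card_coe_set_eq s]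
  exact (isTree_iff_connected_and_card.1 h).2

lemma Reachable.lift {G' : SimpleGraph W} (f : V → W)
    (hf : ∀ u v, G.Adj u v → G'.Reachable (f u) (f v)) {u v : V} (h : G.Reachable u v) :
    G'.Reachable (f u) (f v) := by
  rw [reachable_iff_reflTransGen] at h ⊢
  exact h.lift' f fun a b hab => (reachable_iff_reflTransGen _ _).1 (hf a b hab)

end SimpleGraph

namespace IsPartition

variable {V : Type*} {k : ℕ} {C : Fin k → Set V}

noncomputable def index (h : IsPartition C) (v : V) : Fin k :=
  (Set.mem_iUnion.1 (h.2.2.symm ▸ Set.mem_univ v)).choose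

lemma mem_index (h : IsPartition C) (v : V) : v ∈ C (h.index v) :=
  (Set.mem_iUnion.1 (h.2.2.symm ▸ Set.mem_univ v)).choose_spec

lemma index_eq_iff (h : IsPartition C) {v : V} {i : Fin k} : h.index v = i ↔ v ∈ C i :=
  ⟨fun hi => hi ▸ h.mem_index v, fun hv =>
    by_contra fun hne => Set.disjoint_left.1 (h.2.1 hne) (h.mem_index v) hv⟩

lemma pairwise_disjoint_sym2 (h : IsPartition C) : Pairwise (Disjoint on fun i => (C i).sym2) :=
  fun _ _ hij => Set.disjoint_sym2 (h.2.1 hij)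

lemma sum_ncard [Finite V] (h : IsPartition C) : ∑ i, (C i).ncard = Nat.card V := by
  rw [← finsum_eq_sum_of_fintype, ← Set.ncard_iUnion_of_finite (fun i => Set.toFinite _) h.2.1,
    h.2.2, Set.ncard_univ]

lemma map_index_eq_iff (h : IsPartition C) {e : Sym2 V} {i j : Fin k} :
    Sym2.map h.index e = s(i, j) ↔ Crosses e (C i) (C j) := by
  induction e using Sym2.ind with | _ a b => ?_
  simp only [Sym2.map_mk, Sym2.eq_iff, h.index_eq_iff, Crosses]
  aesop

lemma eq_of_crosses_of_mem_sym2 (h : IsPartition C) {e : Sym2 V} {i j l : Fin k}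
    (he : Crosses e (C i) (C j)) (hl : e ∈ (C l).sym2) : i = j := by
  obtain ⟨a, ha, b, hb, rfl⟩ := he
  rw [← h.index_eq_iff.2 ha, h.index_eq_iff.2 hl.1, ← h.index_eq_iff.2 hb, h.index_eq_iff.2 hl.2]

lemma disjoint_iUnion_sym2 (h : IsPartition C) {T : SimpleGraph (Fin k)}
    {F : Set (Sym2 V)} (hcross : ∀ e ∈ F, ∃ i j, T.Adj i j ∧ Crosses e (C i) (C j)) :
    Disjoint F (⋃ i, (C i).sym2) := by
  refine Set.disjoint_left.2 fun e he hmem => ?_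
  obtain ⟨i, j, hij, hc⟩ := hcross e he
  obtain ⟨l, hl⟩ := Set.mem_iUnion.1 hmem
  exact hij.ne (h.eq_of_crosses_of_mem_sym2 hc hl)

lemma bijOn_map_index (h : IsPartition C) {T : SimpleGraph (Fin k)}
    {F : Set (Sym2 V)} (hunique : ∀ i j, T.Adj i j → ∃! e, e ∈ F ∧ Crosses e (C i) (C j))
    (hcross : ∀ e ∈ F, ∃ i j, T.Adj i j ∧ Crosses e (C i) (C j)) :
    Set.BijOn (Sym2.map h.index) F T.edgeSet := by
  refine ⟨fun e he => ?_, fun e he e' he' hee' => ?_, fun f hf => ?_⟩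
  · obtain ⟨i, j, hij, hc⟩ := hcross e he
    rwa [h.map_index_eq_iff.2 hc]
  · obtain ⟨i, j, hij, hc⟩ := hcross e he
    have hc' : Crosses e' (C i) (C j) := h.map_index_eq_iff.1 (hee' ▸ h.map_index_eq_iff.2 hc)
    exact (hunique i j hij).unique ⟨he, hc⟩ ⟨he', hc'⟩
  · induction f using Sym2.ind with | _ i j => ?_
    obtain ⟨e, ⟨he, hc⟩, -⟩ := hunique i j hf
    exact ⟨e, he, h.map_index_eq_iff.2 hc⟩

end IsPartition

section Contraction

variable {V : Type*} {k : ℕ} {C : Fin k → Set V} {G H : SimpleGraph V}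

lemma contractClusters_mono (h : H ≤ G) : contractClusters H C ≤ contractClusters G C :=
  fun _ _ ⟨hij, u, hu, v, hv, huv⟩ => ⟨hij, u, hu, v, hv, h huv⟩

lemma SimpleGraph.Connected.contractClusters (hH : H.Connected) (hC : IsPartition C) :
    (_root_.contractClusters H C).Connected := by
  have : Nonempty (Fin k) := ⟨hC.index hH.nonempty.some⟩
  refine ⟨fun i j => ?_⟩
  obtain ⟨a, ha⟩ := hC.1 i
  obtain ⟨b, hb⟩ := hC.1 j
  rw [← hC.index_eq_iff.2 ha, ← hC.index_eq_iff.2 hb]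
  refine (hH a b).lift hC.index fun u v huv => ?_
  by_cases huv' : hC.index u = hC.index v
  · rw [huv']
  · exact Adj.reachable ⟨huv', u, hC.mem_index u, v, hC.mem_index v, huv⟩

lemma SimpleGraph.connected_of_connected_contractClusters (hC : IsPartition C)
    (hind : ∀ i, (H.induce (C i)).Connected) (hH : (contractClusters H C).Connected) :
    H.Connected := by
  have hcluster : ∀ i, ∀ a ∈ C i, ∀ b ∈ C i, H.Reachable a b := fun i a ha b hb =>
    ((hind i).preconnected ⟨a, ha⟩ ⟨b, hb⟩).map (Embedding.induce (C i)).toHom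
  have hlift : ∀ i j, (contractClusters H C).Reachable i j →
      ∀ a ∈ C i, ∀ b ∈ C j, H.Reachable a b := by
    intro i j hij
    rw [reachable_iff_reflTransGen] at hij
    induction hij with
    | refl => exact hcluster i
    | tail _ hjl ih =>
      obtain ⟨-, u, hu, v, hv, huv⟩ := hjl
      exact fun a ha b hb => ((ih a ha u hu).trans huv.reachable).trans (hcluster _ v hv b hb)
  have : Nonempty V := (hind hH.nonempty.some).nonempty.map Subtype.val
  exact ⟨fun u v => hlift _ _ (hH _ _) u (hC.mem_index u) v (hC.mem_index v)⟩

lemma le_contractClusters_of_surjOn (hC : IsPartition C) {T : SimpleGraph (Fin k)}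
    {F : Set (Sym2 V)} (hFH : F ⊆ H.edgeSet) (hF : Set.SurjOn (Sym2.map hC.index) F T.edgeSet) :
    T ≤ contractClusters H C := by
  intro i j hij
  obtain ⟨e, he, hmap⟩ := hF (show s(i, j) ∈ T.edgeSet from hij)
  obtain ⟨a, ha, b, hb, rfl⟩ := hC.map_index_eq_iff.1 hmap
  exact ⟨hij.ne, a, ha, b, hb, hFH he⟩

lemma contractWeight_mk (w : Sym2 V → ℝ) (i j : Fin k) :
    contractWeight G w C s(i, j) = sInf {x | ∃ e ∈ G.edgeSet, Crosses e (C i) (C j) ∧ x = w e} := by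
  refine congrArg sInf (Set.ext fun x => ⟨?_, ?_⟩)
  · rintro ⟨u, v, huv, hu | hu, rfl⟩
    · exact ⟨s(u, v), huv, ⟨u, hu.1, v, hu.2, rfl⟩, rfl⟩
    · exact ⟨s(u, v), huv, ⟨v, hu.2, u, hu.1, Sym2.eq_swap⟩, rfl⟩
  · rintro ⟨e, he, ⟨u, hu, v, hv, rfl⟩, rfl⟩
    exact ⟨u, v, he, Or.inl ⟨hu, hv⟩, rfl⟩

lemma contractWeight_le [Finite V] {w : Sym2 V → ℝ} {i j : Fin k} {e : Sym2 V}
    (he : e ∈ G.edgeSet) (hc : Crosses e (C i) (C j)) : contractWeight G w C s(i, j) ≤ w e := by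
  rw [contractWeight_mk]
  refine csInf_le ((Set.finite_range w).subset ?_).bddBelow ⟨e, he, hc, rfl⟩
  rintro _ ⟨e', -, -, rfl⟩
  exact ⟨e', rfl⟩

lemma contractWeight_eq_of_isLeast {w : Sym2 V → ℝ} {i j : Fin k} {x : ℝ}
    (h : IsLeast {x | ∃ e ∈ G.edgeSet, Crosses e (C i) (C j) ∧ x = w e} x) :
    contractWeight G w C s(i, j) = x := by
  rw [contractWeight_mk]
  exact h.csInf_eq

end Contraction

section ClusteredSpanningTree

variable {V : Type*} {k : ℕ} {C : Fin k → Set V} {G : SimpleGraph V}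

lemma finsum_contractWeight_le [Finite V] (hC : IsPartition C) {w : Sym2 V → ℝ}
    (hw : ∀ e, 0 ≤ w e) {T : SimpleGraph V} (hTG : T ≤ G) {H : SimpleGraph (Fin k)}
    (hH : H ≤ contractClusters T C) :
    ∑ᶠ f ∈ H.edgeSet, contractWeight G w C f ≤ ∑ᶠ e ∈ T.edgeSet \ ⋃ i, (C i).sym2, w e := by
  refine finsum_mem_le_finsum_mem_of_forall_exists (Set.toFinite _) (Sym2.map hC.index)
    (fun e _ => hw e) fun f hf => ?_
  induction f using Sym2.ind with | _ i j => ?_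
  obtain ⟨hij, a, ha, b, hb, hab⟩ := hH hf
  have hc : Crosses s(a, b) (C i) (C j) := ⟨a, ha, b, hb, rfl⟩
  refine ⟨s(a, b), ⟨hab, ?_⟩, hC.map_index_eq_iff.2 hc, contractWeight_le (hTG hab) hc⟩
  simpa only [Set.mem_iUnion, not_exists] using fun l hl => hij (hC.eq_of_crosses_of_mem_sym2 hc hl)

lemma IsClusteredSpanningTree.isTree_induce_fromEdgeSet {T : SimpleGraph V}
    (hT : IsClusteredSpanningTree G C T) (i : Fin k) :
    ((fromEdgeSet (T.edgeSet ∩ (C i).sym2)).induce (C i)).IsTree := by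
  rw [induce_fromEdgeSet_inter_sym2]
  exact ⟨hT.2.2 i, hT.2.1.isAcyclic.induce _⟩

lemma IsClusteredSpanningTree.add_sum_le_wsum [Finite V] {T : SimpleGraph V}
    (hT : IsClusteredSpanningTree G C T) (hC : IsPartition C) {w : Sym2 V → ℝ}
    (hw : ∀ e, 0 ≤ w e) {a : ℝ} {b : Fin k → ℝ}
    (ha : ∀ H : SimpleGraph (Fin k), H ≤ contractClusters G C → H.IsTree →
      a ≤ ∑ᶠ e ∈ H.edgeSet, contractWeight G w C e)
    (hb : ∀ i, ∀ R : SimpleGraph V, R ≤ G → (∀ u v, R.Adj u v → u ∈ C i ∧ v ∈ C i) →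
      (R.induce (C i)).IsTree → b i ≤ wsum R w) :
    a + ∑ i, b i ≤ wsum T w := by
  obtain ⟨H, hHT, hH⟩ := (hT.2.1.connected.contractClusters hC).exists_isTree_le
  rw [wsum, finsum_mem_eq_diff_add_finsum_inter (Set.toFinite _) hC.pairwise_disjoint_sym2]
  refine add_le_add ((ha H (hHT.trans (contractClusters_mono hT.1)) hH).trans
    (finsum_contractWeight_le hC hw hT.1 hHT)) (Finset.sum_le_sum fun i _ => ?_)
  have hsub : T.edgeSet ∩ (C i).sym2 ⊆ T.edgeSet := Set.inter_subset_left
  rw [← edgeSet_fromEdgeSet_of_subset hsub]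
  exact hb i _ ((fromEdgeSet_le _).2 fun e he => edgeSet_mono hT.1 he.1.1)
    (fun u v huv => huv.1.2) (hT.isTree_induce_fromEdgeSet i)

lemma finsum_edgeSet_fromEdgeSet_union_iUnion {M : Type*} [AddCommMonoid M] [Finite V]
    (hC : IsPartition C) {Ti : Fin k → SimpleGraph V} (hTiG : ∀ i, Ti i ≤ G)
    (hTiC : ∀ i, (Ti i).edgeSet ⊆ (C i).sym2) {F : Set (Sym2 V)} (hFG : F ⊆ G.edgeSet)
    (hFC : Disjoint F (⋃ i, (C i).sym2)) (f : Sym2 V → M) :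
    ∑ᶠ e ∈ (fromEdgeSet (F ∪ ⋃ i, (Ti i).edgeSet)).edgeSet, f e =
      ∑ᶠ e ∈ F, f e + ∑ i, ∑ᶠ e ∈ (Ti i).edgeSet, f e := by
  rw [edgeSet_fromEdgeSet_of_subset
    (Set.union_subset hFG (Set.iUnion_subset fun i => edgeSet_mono (hTiG i)))]
  exact finsum_mem_union_iUnion (Set.toFinite F) (fun i => Set.toFinite _)
    (hFC.mono_right (Set.iUnion_mono hTiC))
    (fun i j hij => (hC.pairwise_disjoint_sym2 hij).mono (hTiC i) (hTiC j)) f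

lemma isClusteredSpanningTree_fromEdgeSet [Finite V] (hC : IsPartition C)
    {Ti : Fin k → SimpleGraph V} (hTiG : ∀ i, Ti i ≤ G) (hTiC : ∀ i, (Ti i).edgeSet ⊆ (C i).sym2)
    (hTi : ∀ i, ((Ti i).induce (C i)).IsTree) {T : SimpleGraph (Fin k)} (hT : T.IsTree)
    {F : Set (Sym2 V)} (hFG : F ⊆ G.edgeSet) (hFC : Disjoint F (⋃ i, (C i).sym2))
    (hF : Set.BijOn (Sym2.map hC.index) F T.edgeSet) :
    IsClusteredSpanningTree G C (fromEdgeSet (F ∪ ⋃ i, (Ti i).edgeSet)) := by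
  set S := F ∪ ⋃ i, (Ti i).edgeSet
  have hSG : S ⊆ G.edgeSet :=
    Set.union_subset hFG (Set.iUnion_subset fun i => edgeSet_mono (hTiG i))
  have hSE : (fromEdgeSet S).edgeSet = S := edgeSet_fromEdgeSet_of_subset hSG
  have hinduce (i : Fin k) : ((fromEdgeSet S).induce (C i)).Connected := by
    rw [induce_eq_of_edgeSet_inter_sym2_eq (H := Ti i) (by
      rw [hSE, Set.union_iUnion_inter_eq hC.pairwise_disjoint_sym2 hFC hTiC,
        Set.inter_eq_left.2 (hTiC i)])]
    exact (hTi i).connected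
  have hconn : (fromEdgeSet S).Connected :=
    connected_of_connected_contractClusters hC hinduce (hT.connected.mono
      (le_contractClusters_of_surjOn hC (hSE.symm ▸ Set.subset_union_left) hF.surjOn))
  have hcard : (fromEdgeSet S).edgeSet.ncard = F.ncard + ∑ i, (Ti i).edgeSet.ncard := by
    simpa only [finsum_one] using
      finsum_edgeSet_fromEdgeSet_union_iUnion hC hTiG hTiC hFG hFC fun _ => (1 : ℕ)
  have hFcard : F.ncard + 1 = k := by
    simpa [hF.ncard_eq] using (isTree_iff_connected_and_card.1 hT).2
  have hTicard : ∑ i, ((Ti i).edgeSet.ncard + 1) = Nat.card V := by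
    rw [← hC.sum_ncard]
    exact Finset.sum_congr rfl fun i _ => ncard_edgeSet_add_one_of_isTree_induce (hTiC i) (hTi i)
  refine ⟨(fromEdgeSet_le _).2 (Set.sdiff_subset.trans hSG),
    isTree_iff_connected_and_card.2 ⟨hconn, ?_⟩, hinduce⟩
  rw [Nat.card_coe_set_eq, hcard, ← hTicard, Finset.sum_add_distrib, Finset.sum_const,
    Finset.card_univ, Fintype.card_fin, smul_eq_mul, mul_one]
  omega

end ClusteredSpanningTree

theorem stmt17_general {V : Type*} [Fintype V] (G : SimpleGraph V)
    (w : Sym2 V → ℝ) (hw : ∀ e, 0 ≤ w e)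
    {k : ℕ} (C : Fin k → Set V) (hpart : IsPartition C)
    -- `Ti i` is a minimum spanning tree of `G[C i]` (viewed as a graph on `V`
    -- whose edges all lie inside `C i`):
    (Ti : Fin k → SimpleGraph V)
    (hTi : ∀ i, Ti i ≤ G ∧ (∀ u v, (Ti i).Adj u v → u ∈ C i ∧ v ∈ C i) ∧
      ((Ti i).induce (C i)).IsTree)
    (hTiMin : ∀ i, ∀ T' : SimpleGraph V, T' ≤ G →
      (∀ u v, T'.Adj u v → u ∈ C i ∧ v ∈ C i) → (T'.induce (C i)).IsTree →
      wsum (Ti i) w ≤ wsum T' w)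
    -- `T'` is a minimum-weight spanning tree of the weighted cluster-contraction graph:
    (T' : SimpleGraph (Fin k)) (hT'tree : T'.IsTree)
    (hT'min : ∀ H : SimpleGraph (Fin k), H ≤ contractClusters G C → H.IsTree →
      (∑ᶠ e ∈ T'.edgeSet, contractWeight G w C e) ≤
        ∑ᶠ e ∈ H.edgeSet, contractWeight G w C e)
    -- `F` consists of, for each edge `{i, j}` of `T'`, exactly one minimum-weight
    -- `G`-edge joining `C i` and `C j`, and nothing else:
    (F : Set (Sym2 V))
    (hF1 : ∀ e ∈ F, e ∈ G.edgeSet)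
    (hF2 : ∀ i j, T'.Adj i j → ∃! e, e ∈ F ∧ Crosses e (C i) (C j))
    (hF3 : ∀ e ∈ F, ∀ i j, i ≠ j → Crosses e (C i) (C j) → T'.Adj i j ∧
      IsLeast {x | ∃ e' ∈ G.edgeSet, Crosses e' (C i) (C j) ∧ x = w e'} (w e))
    (hF4 : ∀ e ∈ F, ∃ i j, T'.Adj i j ∧ Crosses e (C i) (C j)) :
    IsClusteredSpanningTree G C (SimpleGraph.fromEdgeSet (F ∪ ⋃ i, (Ti i).edgeSet)) ∧
      ∀ T : SimpleGraph V, IsClusteredSpanningTree G C T →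
        wsum (SimpleGraph.fromEdgeSet (F ∪ ⋃ i, (Ti i).edgeSet)) w ≤ wsum T w := by
  have hTiC (i : Fin k) : (Ti i).edgeSet ⊆ (C i).sym2 :=
    edgeSet_subset_sym2_iff_forall_adj.2 (hTi i).2.1
  have hFC := hpart.disjoint_iUnion_sym2 hF4
  have hbij := hpart.bijOn_map_index hF2 hF4
  have hweight : ∀ e ∈ F, w e = contractWeight G w C (Sym2.map hpart.index e) := by
    intro e he
    obtain ⟨i, j, hij, hc⟩ := hF4 e he
    rw [hpart.map_index_eq_iff.2 hc, contractWeight_eq_of_isLeast (hF3 e he i j hij.ne hc).2]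
  refine ⟨isClusteredSpanningTree_fromEdgeSet hpart (fun i => (hTi i).1) hTiC
    (fun i => (hTi i).2.2) hT'tree hF1 hFC hbij, fun T hT => ?_⟩
  calc wsum (fromEdgeSet (F ∪ ⋃ i, (Ti i).edgeSet)) w
      = ∑ᶠ e ∈ F, w e + ∑ i, wsum (Ti i) w :=
        finsum_edgeSet_fromEdgeSet_union_iUnion hpart (fun i => (hTi i).1) hTiC hF1 hFC w
    _ = ∑ᶠ f ∈ T'.edgeSet, contractWeight G w C f + ∑ i, wsum (Ti i) w := by
        rw [finsum_mem_eq_of_bijOn _ hbij hweight]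
    _ ≤ wsum T w := hT.add_sum_le_wsum hpart hw hT'min hTiMin

theorem stmt17 {V : Type*} [Fintype V] (G : SimpleGraph V) (hG : G.Connected)
    (w : Sym2 V → ℝ) (hw : ∀ e, 0 ≤ w e)
    {k : ℕ} (C : Fin k → Set V) (hpart : IsPartition C)
    (hconn : ∀ i, (G.induce (C i)).Connected)
    -- `Ti i` is a minimum spanning tree of `G[C i]` (viewed as a graph on `V`
    -- whose edges all lie inside `C i`):
    (Ti : Fin k → SimpleGraph V)
    (hTi : ∀ i, Ti i ≤ G ∧ (∀ u v, (Ti i).Adj u v → u ∈ C i ∧ v ∈ C i) ∧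
      ((Ti i).induce (C i)).IsTree)
    (hTiMin : ∀ i, ∀ T' : SimpleGraph V, T' ≤ G →
      (∀ u v, T'.Adj u v → u ∈ C i ∧ v ∈ C i) → (T'.induce (C i)).IsTree →
      wsum (Ti i) w ≤ wsum T' w)
    -- `T'` is a minimum-weight spanning tree of the weighted cluster-contraction graph:
    (T' : SimpleGraph (Fin k)) (hT'le : T' ≤ contractClusters G C) (hT'tree : T'.IsTree)
    (hT'min : ∀ H : SimpleGraph (Fin k), H ≤ contractClusters G C → H.IsTree →
      (∑ᶠ e ∈ T'.edgeSet, contractWeight G w C e) ≤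
        ∑ᶠ e ∈ H.edgeSet, contractWeight G w C e)
    -- `F` consists of, for each edge `{i, j}` of `T'`, exactly one minimum-weight
    -- `G`-edge joining `C i` and `C j`, and nothing else:
    (F : Set (Sym2 V))
    (hF1 : ∀ e ∈ F, e ∈ G.edgeSet)
    (hF2 : ∀ i j, T'.Adj i j → ∃! e, e ∈ F ∧ Crosses e (C i) (C j))
    (hF3 : ∀ e ∈ F, ∀ i j, i ≠ j → Crosses e (C i) (C j) → T'.Adj i j ∧
      IsLeast {x | ∃ e' ∈ G.edgeSet, Crosses e' (C i) (C j) ∧ x = w e'} (w e))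
    (hF4 : ∀ e ∈ F, ∃ i j, T'.Adj i j ∧ Crosses e (C i) (C j)) :
    IsClusteredSpanningTree G C (SimpleGraph.fromEdgeSet (F ∪ ⋃ i, (Ti i).edgeSet)) ∧
      ∀ T : SimpleGraph V, IsClusteredSpanningTree G C T →
        wsum (SimpleGraph.fromEdgeSet (F ∪ ⋃ i, (Ti i).edgeSet)) w ≤ wsum T w :=
  stmt17_general G w hw C hpart Ti hTi hTiMin T' hT'tree hT'min F hF1 hF2 hF3 hF4
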